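/- arXiv:1310.5655 — 2 statements merged into one kernel-verified Lean document; each statement's English description precedes it below -/
import Mathlib

section
/- Let μ be a vector measure (valued in a Hilbert space) on a separable Banach space X, π : X → X a Borel map, and f : X × (H⊗H) → [0,∞) Borel, convex and positively homogeneous in the second variable. Then ∫ f(x, d(π_♯μ)/d|π_♯μ|(x)) d|π_♯μ|(x) ≤ ∫ f(π(z), dμ/d|μ|(z)) d|μ|(z). -/
open MeasureTheory ProbabilityTheory
open scoped ENNReal

noncomputable section

open Filter Topology Set in
private lemma sublinear_bound {W : Type*} [NormedAddCommGroup W] [NormedSpace ℝ W]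
    [CompleteSpace W] [MeasurableSpace W] [BorelSpace W]
    (p : W → ℝ) (hp : Measurable p) (hp0 : ∀ w, 0 ≤ p w)
    (hadd : ∀ a b, p (a + b) ≤ p a + p b)
    (hh : ∀ (w : W) (c : ℝ), 0 ≤ c → p (c • w) = c * p w) :
    ∃ C : ℝ, 0 ≤ C ∧ ∀ w, p w ≤ C * ‖w‖ := by
  have hW : Nonempty W := ⟨0⟩
  have hcover : (⋃ n : ℕ, {w : W | p w ≤ n}) = univ := by
    ext w
    simp only [mem_iUnion, mem_setOf_eq, mem_univ, iff_true]
    exact ⟨⌈p w⌉₊, Nat.le_ceil _⟩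
  have hmeas : ∀ n : ℕ, MeasurableSet {w : W | p w ≤ n} := fun n =>
    measurableSet_le hp measurable_const
  obtain ⟨n, hn⟩ : ∃ n : ℕ, ¬ IsMeagre {w : W | p w ≤ n} := by
    by_contra h
    push_neg at h
    have hU : IsMeagre (⋃ n : ℕ, {w : W | p w ≤ n}) := isMeagre_iUnion h
    rw [hcover] at hU
    have h2 : (∅ : Set W) ∈ residual W := by
      simpa [IsMeagre, compl_univ] using hU
    obtain ⟨w, hw⟩ := (dense_of_mem_residual h2).nonempty
    exact hw
  obtain ⟨U, hUo, hSU⟩ := ((hmeas n).baireMeasurableSet).residualEq_isOpen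
  have hUne : U.Nonempty := by
    rcases eq_empty_or_nonempty U with h | h
    · exfalso
      apply hn
      rw [h] at hSU
      have : {w : W | p w ≤ n}ᶜ ∈ residual W := by
        filter_upwards [hSU] with w hw
        intro hws
        exact Set.notMem_empty w (Eq.mp hw hws)
      exact this
    · exact h
  -- p is bounded by n on U
  have hUb : ∀ x ∈ U, p x ≤ n := by
    intro x hx
    set φ : W ≃ₜ W := (Homeomorph.neg W).trans (Homeomorph.addLeft ((2:ℝ) • x)) with hφ
    have hφval : ∀ w, φ w = (2:ℝ) • x - w := fun w => by
      simp [hφ, sub_eq_add_neg]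
    have hres : Tendsto φ (residual W) (residual W) :=
      tendsto_residual_of_isOpenMap φ.continuous φ.isOpenMap
    have hG : ∀ᶠ w in residual W,
        ((w ∈ {w : W | p w ≤ n}) = (w ∈ U)) ∧
        ((φ w ∈ {w : W | p w ≤ n}) = (φ w ∈ U)) :=
      hSU.and (hres.eventually hSU)
    have hVo : IsOpen (U ∩ φ ⁻¹' U) := hUo.inter (hUo.preimage φ.continuous)
    have hxV : x ∈ U ∩ φ ⁻¹' U := by
      refine ⟨hx, ?_⟩
      have : φ x = x := by rw [hφval, two_smul]; abel
      simpa [Set.mem_preimage, this] using hx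
    obtain ⟨w, hwV, hwG⟩ :=
      (dense_of_mem_residual hG).inter_open_nonempty _ hVo ⟨x, hxV⟩
    have hw1 : p w ≤ n := hwG.1.mpr hwV.1
    have hw2 : p (φ w) ≤ n := hwG.2.mpr hwV.2
    have hsum : w + φ w = (2:ℝ) • x := by rw [hφval w]; abel
    have hx2 : x = (2⁻¹:ℝ) • (w + φ w) := by
      rw [hsum, smul_smul]; norm_num
    have h1 : p x = 2⁻¹ * p (w + φ w) := by
      rw [hx2, hh _ _ (by norm_num : (0:ℝ) ≤ 2⁻¹)]
    have h2 := hadd w (φ w)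
    rw [h1]; linarith
  obtain ⟨x1, hx1⟩ := hUne
  obtain ⟨r, hr, hball⟩ := Metric.isOpen_iff.mp hUo x1 hx1
  set M : ℝ := n + p (-x1) with hM
  have hbound : ∀ w : W, ‖w‖ < r → p w ≤ M := by
    intro w hw
    have hmem : x1 + w ∈ U := by
      apply hball
      simp [Metric.mem_ball, dist_eq_norm, hw]
    have := hadd (x1 + w) (-x1)
    have h3 : x1 + w + -x1 = w := by abel
    rw [h3] at this
    have h4 := hUb _ hmem
    simp only [hM]; linarith
  have hM0 : 0 ≤ M := le_trans (hp0 0) (hbound 0 (by simpa using hr))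
  refine ⟨M * (2 / r), by positivity, fun w => ?_⟩
  rcases eq_or_ne w 0 with rfl | hw
  · have : p (0 : W) = 0 := by
      have := hh 0 0 le_rfl
      simpa using this
    simp [this]
  · set c : ℝ := (2 * ‖w‖) / r with hc
    have hwpos : (0:ℝ) < ‖w‖ := norm_pos_iff.mpr hw
    have hcpos : 0 < c := by positivity
    have hkey : w = c • (c⁻¹ • w) := by
      rw [smul_smul, mul_inv_cancel₀ hcpos.ne', one_smul]
    have hnorm : ‖c⁻¹ • w‖ < r := by
      rw [norm_smul, norm_inv, Real.norm_eq_abs, abs_of_pos hcpos, hc]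
      rw [inv_div]
      calc r / (2 * ‖w‖) * ‖w‖ = r / 2 := by field_simp
      _ < r := by linarith
    have h5 : p w = c * p (c⁻¹ • w) := by
      conv_lhs => rw [hkey]
      exact hh _ _ hcpos.le
    have h6 : p (c⁻¹ • w) ≤ M := hbound _ hnorm
    calc p w = c * p (c⁻¹ • w) := h5
    _ ≤ c * M := by nlinarith
    _ = M * (2 / r) * ‖w‖ := by rw [hc]; field_simp

private lemma sublinear_subadd {W : Type*} [AddCommGroup W] [Module ℝ W]
    (p : W → ℝ) (hconv : ConvexOn ℝ Set.univ p)
    (hh : ∀ (w : W) (c : ℝ), 0 ≤ c → p (c • w) = c * p w) :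
    ∀ a b, p (a + b) ≤ p a + p b := by
  intro a b
  have hc := hconv.2 (Set.mem_univ a) (Set.mem_univ b)
    (by norm_num : (0:ℝ) ≤ 2⁻¹) (by norm_num : (0:ℝ) ≤ 2⁻¹) (by norm_num)
  have hs : (2:ℝ) • ((2⁻¹:ℝ) • a + (2⁻¹:ℝ) • b) = a + b := by
    rw [smul_add, smul_smul, smul_smul]; norm_num
  have h2 : p (a + b) = 2 * p ((2⁻¹:ℝ) • a + (2⁻¹:ℝ) • b) := by
    rw [← hs, hh _ _ (by norm_num : (0:ℝ) ≤ 2)]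
  rw [h2]
  simp only [smul_eq_mul] at hc
  linarith

private lemma sublinear_jensen {W : Type*} [NormedAddCommGroup W] [NormedSpace ℝ W]
    [CompleteSpace W] [MeasurableSpace W] [BorelSpace W]
    {α : Type*} [MeasurableSpace α] (μ : Measure α) [IsFiniteMeasure μ]
    (p : W → ℝ) (hp : Measurable p) (hp0 : ∀ w, 0 ≤ p w)
    (hconv : ConvexOn ℝ Set.univ p)
    (hh : ∀ (w : W) (c : ℝ), 0 ≤ c → p (c • w) = c * p w)
    (u : α → W) (hu : Integrable u μ) (hpu : Integrable (fun a => p (u a)) μ) :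
    p (∫ a, u a ∂μ) ≤ ∫ a, p (u a) ∂μ := by
  have hadd := sublinear_subadd p hconv hh
  have hp0' : p 0 = 0 := by
    have := hh 0 0 le_rfl; simpa using this
  set w0 := ∫ a, u a ∂μ with hw0def
  by_cases hw0 : w0 = 0
  · rw [hw0, hp0']
    exact integral_nonneg fun a => hp0 _
  obtain ⟨C, hC0, hC⟩ := sublinear_bound p hp hp0 hadd hh
  have hdom : ∀ z : (LinearPMap.mkSpanSingleton (K := ℝ) (L := ℝ) (σ := RingHom.id ℝ) w0 (p w0) hw0).domain,
      (LinearPMap.mkSpanSingleton (K := ℝ) (L := ℝ) (σ := RingHom.id ℝ) w0 (p w0) hw0) z ≤ p z := by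
    rintro ⟨z, hz⟩
    rcases Submodule.mem_span_singleton.mp hz with ⟨c, rfl⟩
    rw [LinearPMap.mkSpanSingleton'_apply, RingHom.id_apply]
    rcases le_or_gt 0 c with hcpos | hcneg
    · rw [hh w0 c hcpos, smul_eq_mul]
    · have h1 : p (c • w0) = (-c) * p (-w0) := by
        have h : c • w0 = (-c) • (-w0) := by simp
        rw [h, hh _ (-c) (by linarith)]
      have h2 : 0 ≤ p w0 + p (-w0) := by
        have h3 := hadd w0 (-w0)
        have h4 : w0 + -w0 = 0 := by abel
        rw [h4, hp0'] at h3
        linarith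
      rw [smul_eq_mul, h1]
      nlinarith
  obtain ⟨g, hg_eq, hg_le⟩ := exists_extension_of_le_sublinear
    (LinearPMap.mkSpanSingleton (K := ℝ) (L := ℝ) (σ := RingHom.id ℝ) w0 (p w0) hw0) p
    (fun c hc x => hh x c hc.le) hadd hdom
  have hgw0 : g w0 = p w0 := by
    have h := hg_eq ⟨w0, Submodule.mem_span_singleton_self w0⟩
    rw [LinearPMap.mkSpanSingleton_apply] at h
    exact h
  have hgbound : ∀ w, ‖g w‖ ≤ C * ‖w‖ := by
    intro w
    rw [Real.norm_eq_abs, abs_le]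
    constructor
    · have h1 := (hg_le (-w)).trans (hC (-w))
      rw [map_neg, norm_neg] at h1
      linarith
    · exact (hg_le w).trans (hC w)
  set G : W →L[ℝ] ℝ := LinearMap.mkContinuous g C hgbound with hGdef
  have hGu : ∫ a, G (u a) ∂μ = G w0 := ContinuousLinearMap.integral_comp_comm G hu
  have hpg : p w0 = G w0 := by rw [← hgw0]; rfl
  rw [hpg, ← hGu]
  refine integral_mono (G.integrable_comp hu) hpu fun a => ?_
  exact hg_le (u a)

/-- Jensen-type inequality for push-forwards of vector measures,
Proposition `prop-cyl-approx-2` of the paper.  A vector measure `μ` on a separable Banach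
space `X`, with values in a Hilbert space `W` (playing the role of `H ⊗ H`), is encoded by its
total variation measure `m = |μ|` together with its polar density `σ = dμ/d|μ|` (of norm one
`m`-a.e.).  The push-forward `π_♯ μ` is likewise encoded by a pair `(ν, τ)` with `‖τ‖ = 1`
`ν`-a.e., characterized by `∫ g τ dν = ∫ (g ∘ π) σ dm` for every bounded Borel `g` (this forces
`ν = |π_♯ μ|` and `τ` to be its polar density).  For every Borel `f : X × W → [0,∞)`, convex
and positively homogeneous in the second variable,
`∫ f(x, d(π_♯μ)/d|π_♯μ|) d|π_♯μ| ≤ ∫ f(π z, dμ/d|μ|) d|μ|`. -/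
theorem stmt6 {X W : Type*}
    [NormedAddCommGroup X] [NormedSpace ℝ X] [CompleteSpace X]
    [TopologicalSpace.SeparableSpace X] [MeasurableSpace X] [BorelSpace X]
    [NormedAddCommGroup W] [InnerProductSpace ℝ W] [CompleteSpace W]
    [MeasurableSpace W] [BorelSpace W]
    -- the vector measure μ : total variation m and polar density σ
    (m : Measure X) [IsFiniteMeasure m] (σ : X → W)
    (hσm : AEStronglyMeasurable σ m) (hσ : ∀ᵐ z ∂m, ‖σ z‖ = 1)
    -- the Borel map π
    (π : X → X) (hπ : Measurable π)
    -- the push-forward π_♯ μ : total variation ν and polar density τ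
    (ν : Measure X) [IsFiniteMeasure ν] (τ : X → W)
    (hτm : AEStronglyMeasurable τ ν) (hτ : ∀ᵐ x ∂ν, ‖τ x‖ = 1)
    (hpush : ∀ g : X → ℝ, Measurable g → (∀ x, |g x| ≤ 1) →
      (∫ x, g x • τ x ∂ν) = ∫ z, g (π z) • σ z ∂m)
    -- the integrand f
    (f : X → W → ℝ) (hfm : Measurable fun p : X × W => f p.1 p.2)
    (hf0 : ∀ x w, 0 ≤ f x w)
    (hfconvex : ∀ x, ConvexOn ℝ Set.univ (f x))
    (hfhom : ∀ x w (c : ℝ), 0 ≤ c → f x (c • w) = c * f x w) :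
    (∫⁻ x, ENNReal.ofReal (f x (τ x)) ∂ν) ≤ ∫⁻ z, ENNReal.ofReal (f (π z) (σ z)) ∂m := by
  classical
  rcases isEmpty_or_nonempty X with hX | hX
  · simp [Subsingleton.elim ν 0, Subsingleton.elim m 0]
  -- measurable representatives with norm bounded by 1
  set σ0 := hσm.mk σ with hσ0def
  have hσ0meas : Measurable σ0 := hσm.stronglyMeasurable_mk.measurable
  set σ1 : X → W := fun z => if ‖σ0 z‖ ≤ 1 then σ0 z else 0 with hσ1def
  have hσ1meas : Measurable σ1 :=
    Measurable.ite (measurableSet_le hσ0meas.norm measurable_const) hσ0meas measurable_const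
  have hσ1sm : StronglyMeasurable σ1 :=
    StronglyMeasurable.ite (measurableSet_le hσ0meas.norm measurable_const)
      hσm.stronglyMeasurable_mk stronglyMeasurable_const
  have hσ1le : ∀ z, ‖σ1 z‖ ≤ 1 := by
    intro z
    by_cases h : ‖σ0 z‖ ≤ 1 <;> simp [hσ1def, h]
  have hσ1ae : σ1 =ᵐ[m] σ := by
    filter_upwards [hσm.ae_eq_mk, hσ] with z h1 h2
    have hn : ‖σ0 z‖ ≤ 1 := by rw [hσ0def, ← h1, h2]
    calc σ1 z = σ0 z := by rw [hσ1def]; simp [hn]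
    _ = σ z := h1.symm
  set τ0 := hτm.mk τ with hτ0def
  have hτ0meas : Measurable τ0 := hτm.stronglyMeasurable_mk.measurable
  set τ1 : X → W := fun z => if ‖τ0 z‖ ≤ 1 then τ0 z else 0 with hτ1def
  have hτ1meas : Measurable τ1 :=
    Measurable.ite (measurableSet_le hτ0meas.norm measurable_const) hτ0meas measurable_const
  have hτ1sm : StronglyMeasurable τ1 :=
    StronglyMeasurable.ite (measurableSet_le hτ0meas.norm measurable_const)
      hτm.stronglyMeasurable_mk stronglyMeasurable_const
  have hτ1le : ∀ z, ‖τ1 z‖ ≤ 1 := by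
    intro z
    by_cases h : ‖τ0 z‖ ≤ 1 <;> simp [hτ1def, h]
  have hτ1ae : τ1 =ᵐ[ν] τ := by
    filter_upwards [hτm.ae_eq_mk, hτ] with z h1 h2
    have hn : ‖τ0 z‖ ≤ 1 := by rw [hτ0def, ← h1, h2]
    calc τ1 z = τ0 z := by rw [hτ1def]; simp [hn]
    _ = τ z := h1.symm
  -- disintegration setup
  set e : X → X × X := fun z => (π z, z) with hedef
  have he : Measurable e := hπ.prodMk measurable_id
  set ρm : Measure (X × X) := m.map e with hρdef
  haveI : IsFiniteMeasure ρm := by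
    constructor
    rw [hρdef, Measure.map_apply he MeasurableSet.univ]
    exact measure_lt_top m _
  set lam : Measure X := ρm.fst with hlamdef
  haveI : IsFiniteMeasure lam := by
    constructor
    rw [hlamdef, Measure.fst_univ]
    exact measure_lt_top ρm _
  set κ := ρm.condKernel with hκdef
  have hdis : lam ⊗ₘ κ = ρm := ρm.disintegrate κ
  have hlam_map : lam = m.map π := by
    rw [hlamdef, hρdef, Measure.fst, Measure.map_map measurable_fst he]
    rfl
  -- absolute continuity ν ≪ lam
  have hac : ν ≪ lam := by
    rw [hlam_map]
    refine Measure.AbsolutelyContinuous.mk (fun A hA hA0 => ?_)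
    have hmA : m (π ⁻¹' A) = 0 := by rwa [Measure.map_apply hπ hA] at hA0
    have hπA : ∀ᵐ z ∂m, π z ∉ A := measure_eq_zero_iff_ae_notMem.mp hmA
    have hind : (fun x => A.indicator τ1 x) =ᵐ[ν] 0 := by
      apply Integrable.ae_eq_zero_of_forall_setIntegral_eq_zero
      · refine Integrable.mono' (integrable_const 1)
          ((hτ1sm.indicator hA).aestronglyMeasurable) (ae_of_all _ fun x => ?_)
        by_cases hx : x ∈ A
        · simp only [Set.indicator_of_mem hx]; exact hτ1le x
        · simp [Set.indicator_of_notMem hx]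
      · intro B hB _
        have h1 : ∫ x in B, A.indicator τ1 x ∂ν
            = ∫ x, ((A ∩ B).indicator (fun _ => (1:ℝ)) x) • τ1 x ∂ν := by
          rw [← integral_indicator hB]
          congr 1
          funext x
          by_cases hx : x ∈ A <;> by_cases hx' : x ∈ B <;>
            simp [Set.indicator_apply, hx, hx', Set.mem_inter_iff]
        have h2 : (fun x => ((A ∩ B).indicator (fun _ => (1:ℝ)) x) • τ1 x)
            =ᵐ[ν] fun x => ((A ∩ B).indicator (fun _ => (1:ℝ)) x) • τ x := by
          filter_upwards [hτ1ae] with x hx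
          rw [hx]
        rw [h1, integral_congr_ae h2,
          hpush _ (measurable_const.indicator (hA.inter hB))
            (fun x => by
              by_cases hx : x ∈ A ∩ B <;> simp [Set.indicator_apply, hx])]
        have h3 : (fun z => ((A ∩ B).indicator (fun _ => (1:ℝ)) (π z)) • σ z)
            =ᵐ[m] 0 := by
          filter_upwards [hπA] with z hz
          have : π z ∉ A ∩ B := fun h => hz h.1
          simp [Set.indicator_of_notMem this]
        rw [integral_congr_ae h3]
        simp
    have hA0' : ∀ᵐ x ∂ν, x ∉ A := by
      filter_upwards [hind, hτ1ae, hτ] with x h1 h2 h3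
      intro hxA
      rw [Set.indicator_of_mem hxA] at h1
      have : ‖τ1 x‖ = 1 := by rw [h2, h3]
      rw [show (0 : X → W) x = 0 from rfl] at h1
      rw [h1] at this
      simp at this
    exact measure_eq_zero_iff_ae_notMem.mpr hA0'
  set rn := ν.rnDeriv lam with hrndef
  have hwd : lam.withDensity rn = ν := Measure.withDensity_rnDeriv_eq ν lam hac
  -- the two densities agree
  set g2 : X → W := fun x => ∫ z, σ1 z ∂(κ x) with hg2def
  have hg2meas : StronglyMeasurable g2 := by
    have : StronglyMeasurable (fun q : X × X => σ1 q.2) :=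
      hσ1sm.comp_measurable measurable_snd
    exact this.integral_kernel_prod_right'
  have hg2le : ∀ x, ‖g2 x‖ ≤ 1 := by
    intro x
    calc ‖g2 x‖ ≤ ∫ z, ‖σ1 z‖ ∂(κ x) := norm_integral_le_integral_norm _
    _ ≤ ∫ _, (1:ℝ) ∂(κ x) := by
        refine integral_mono_of_nonneg (ae_of_all _ fun z => norm_nonneg _)
          (integrable_const 1) (ae_of_all _ fun z => hσ1le z)
    _ = (κ x Set.univ).toReal := by simp
    _ ≤ 1 := by
        have : κ x Set.univ = 1 := measure_univ
        rw [this]; simp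
  have key : ∀ A : Set X, MeasurableSet A →
      ∫ x in A, ((rn x).toReal • τ1 x) ∂lam = ∫ x in A, g2 x ∂lam := by
    intro A hA
    have hleft : ∫ x in A, ((rn x).toReal • τ1 x) ∂lam = ∫ x in A, τ1 x ∂ν :=
      MeasureTheory.setIntegral_rnDeriv_smul hac hA
    have hFsm : StronglyMeasurable (fun q : X × X =>
        (A.indicator (fun _ => (1:ℝ)) q.1) • σ1 q.2) :=
      (((measurable_const.indicator hA).comp measurable_fst).stronglyMeasurable).smul
        (hσ1sm.comp_measurable measurable_snd)
    have hFint : Integrable (fun q : X × X =>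
        (A.indicator (fun _ => (1:ℝ)) q.1) • σ1 q.2) (lam ⊗ₘ κ) := by
      refine Integrable.mono' (integrable_const 1) hFsm.aestronglyMeasurable
        (ae_of_all _ fun q => ?_)
      rw [norm_smul]
      by_cases hq : q.1 ∈ A
      · simp only [Set.indicator_of_mem hq]
        simpa using hσ1le q.2
      · simp [Set.indicator_of_notMem hq]
    have hright : ∫ x in A, g2 x ∂lam = ∫ x in A, τ1 x ∂ν := by
      calc ∫ x in A, g2 x ∂lam = ∫ x, A.indicator g2 x ∂lam :=
            (integral_indicator hA).symm
      _ = ∫ x, ∫ z, (A.indicator (fun _ => (1:ℝ)) x) • σ1 z ∂(κ x) ∂lam := by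
            congr 1
            funext x
            by_cases hx : x ∈ A <;> simp [Set.indicator_apply, hx, hg2def]
      _ = ∫ q : X × X, (A.indicator (fun _ => (1:ℝ)) q.1) • σ1 q.2 ∂(lam ⊗ₘ κ) :=
            (Measure.integral_compProd hFint).symm
      _ = ∫ q : X × X, (A.indicator (fun _ => (1:ℝ)) q.1) • σ1 q.2 ∂ρm := by
            rw [hdis]
      _ = ∫ z, (A.indicator (fun _ => (1:ℝ)) (π z)) • σ1 z ∂m := by
            rw [hρdef, integral_map he.aemeasurable hFsm.aestronglyMeasurable]
      _ = ∫ z, (A.indicator (fun _ => (1:ℝ)) (π z)) • σ z ∂m := by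
            refine integral_congr_ae ?_
            filter_upwards [hσ1ae] with z hz
            rw [hz]
      _ = ∫ x, (A.indicator (fun _ => (1:ℝ)) x) • τ x ∂ν :=
            (hpush _ (measurable_const.indicator hA)
              (fun x => by by_cases hx : x ∈ A <;> simp [Set.indicator_apply, hx])).symm
      _ = ∫ x, A.indicator τ1 x ∂ν := by
            refine integral_congr_ae ?_
            filter_upwards [hτ1ae] with x hx
            by_cases hxA : x ∈ A <;> simp [Set.indicator_apply, hxA, hx]
      _ = ∫ x in A, τ1 x ∂ν := integral_indicator hA
    rw [hleft, hright]
  have hg1int : ∀ s : Set X, MeasurableSet s → lam s < ∞ →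
      IntegrableOn (fun x => (rn x).toReal • τ1 x) s lam := by
    intro s _ _
    refine Integrable.integrableOn ?_
    refine Integrable.mono' (Measure.integrable_toReal_rnDeriv (μ := ν) (ν := lam))
      ((((Measure.measurable_rnDeriv ν lam).ennreal_toReal.stronglyMeasurable).smul hτ1sm).aestronglyMeasurable)
      (ae_of_all _ fun x => ?_)
    rw [norm_smul, Real.norm_eq_abs, abs_of_nonneg ENNReal.toReal_nonneg]
    calc (rn x).toReal * ‖τ1 x‖ ≤ (rn x).toReal * 1 :=
          mul_le_mul_of_nonneg_left (hτ1le x) ENNReal.toReal_nonneg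
    _ = (rn x).toReal := mul_one _
  have hg2int : ∀ s : Set X, MeasurableSet s → lam s < ∞ →
      IntegrableOn g2 s lam := by
    intro s _ _
    refine Integrable.integrableOn ?_
    exact Integrable.mono' (integrable_const 1) hg2meas.aestronglyMeasurable
      (ae_of_all _ hg2le)
  have hg1g2 : (fun x => (rn x).toReal • τ1 x) =ᵐ[lam] g2 :=
    ae_eq_of_forall_setIntegral_eq_of_sigmaFinite hg1int hg2int
      (fun s hs _ => key s hs)
  -- Jensen, fiberwise, in ENNReal form
  have jensen' : ∀ x : X, ENNReal.ofReal (f x (g2 x))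
      ≤ ∫⁻ z, ENNReal.ofReal (f x (σ1 z)) ∂(κ x) := by
    intro x
    have hpmeas : Measurable (f x) := hfm.comp measurable_prodMk_left
    have hadd := sublinear_subadd (f x) (hfconvex x) (fun w c hc => hfhom x w c hc)
    have hu : Integrable σ1 (κ x) :=
      Integrable.mono' (integrable_const 1) hσ1sm.aestronglyMeasurable
        (ae_of_all _ hσ1le)
    obtain ⟨C, hC0, hC⟩ := sublinear_bound (f x) hpmeas (hf0 x) hadd
      (fun w c hc => hfhom x w c hc)
    have hpu : Integrable (fun z => f x (σ1 z)) (κ x) := by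
      refine Integrable.mono' (integrable_const C)
        ((hpmeas.comp hσ1meas).aestronglyMeasurable) (ae_of_all _ fun z => ?_)
      rw [Real.norm_eq_abs, abs_of_nonneg (hf0 _ _)]
      calc f x (σ1 z) ≤ C * ‖σ1 z‖ := hC _
      _ ≤ C * 1 := mul_le_mul_of_nonneg_left (hσ1le z) hC0
      _ = C := mul_one _
    have hj := sublinear_jensen (κ x) (f x) hpmeas (hf0 x) (hfconvex x)
      (fun w c hc => hfhom x w c hc) σ1 hu hpu
    calc ENNReal.ofReal (f x (g2 x)) ≤ ENNReal.ofReal (∫ z, f x (σ1 z) ∂(κ x)) :=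
          ENNReal.ofReal_le_ofReal hj
    _ = ∫⁻ z, ENNReal.ofReal (f x (σ1 z)) ∂(κ x) :=
          ofReal_integral_eq_lintegral_ofReal hpu (ae_of_all _ fun z => hf0 _ _)
  -- RHS identification
  have hFmeas2 : Measurable (fun q : X × X => ENNReal.ofReal (f q.1 (σ1 q.2))) :=
    (hfm.comp (measurable_fst.prodMk (hσ1meas.comp measurable_snd))).ennreal_ofReal
  have hRHS : ∫⁻ x, ∫⁻ z, ENNReal.ofReal (f x (σ1 z)) ∂(κ x) ∂lam
      = ∫⁻ z, ENNReal.ofReal (f (π z) (σ z)) ∂m := by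
    calc ∫⁻ x, ∫⁻ z, ENNReal.ofReal (f x (σ1 z)) ∂(κ x) ∂lam
        = ∫⁻ q : X × X, ENNReal.ofReal (f q.1 (σ1 q.2)) ∂(lam ⊗ₘ κ) :=
          (Measure.lintegral_compProd hFmeas2).symm
    _ = ∫⁻ q : X × X, ENNReal.ofReal (f q.1 (σ1 q.2)) ∂ρm := by rw [hdis]
    _ = ∫⁻ z, ENNReal.ofReal (f (π z) (σ1 z)) ∂m := by
          rw [hρdef, lintegral_map hFmeas2 he]
    _ = ∫⁻ z, ENNReal.ofReal (f (π z) (σ z)) ∂m := by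
          refine lintegral_congr_ae ?_
          filter_upwards [hσ1ae] with z hz
          rw [hz]
  -- LHS chain
  have hτmeas1 : Measurable fun x => ENNReal.ofReal (f x (τ1 x)) :=
    (hfm.comp (measurable_id.prodMk hτ1meas)).ennreal_ofReal
  calc ∫⁻ x, ENNReal.ofReal (f x (τ x)) ∂ν
      = ∫⁻ x, ENNReal.ofReal (f x (τ1 x)) ∂ν := by
        refine lintegral_congr_ae ?_
        filter_upwards [hτ1ae] with x hx
        rw [hx]
  _ = ∫⁻ x, rn x * ENNReal.ofReal (f x (τ1 x)) ∂lam := by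
        rw [← hwd, lintegral_withDensity_eq_lintegral_mul lam
          (Measure.measurable_rnDeriv ν lam) hτmeas1]
        rfl
  _ ≤ ∫⁻ x, ∫⁻ z, ENNReal.ofReal (f x (σ1 z)) ∂(κ x) ∂lam := by
        refine lintegral_mono_ae ?_
        filter_upwards [hg1g2, Measure.rnDeriv_lt_top ν lam] with x hx hlt
        have h1 : rn x * ENNReal.ofReal (f x (τ1 x))
            = ENNReal.ofReal (f x ((rn x).toReal • τ1 x)) := by
          rw [hfhom x _ _ ENNReal.toReal_nonneg,
            ENNReal.ofReal_mul ENNReal.toReal_nonneg,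
            ENNReal.ofReal_toReal hlt.ne]
        rw [h1]
        have hx' : (rn x).toReal • τ1 x = g2 x := hx
        rw [hx']
        exact jensen' x
  _ = ∫⁻ z, ENNReal.ofReal (f (π z) (σ z)) ∂m := hRHS

end
end

section
/- Let (X,γ,H) be a Wiener space. For a vector field c : X×X → H⊕H of the form c(x,y) = (0, v(x,y)) and the rotation M_s(x,y) = (e^{−s}x + √(1−e^{−2s}) y, −√(1−e^{−2s}) x + e^{−s}y), the Gaussian divergence identity div_y(v(x_s, y_s)) = √(1−e^{−2s}) (div_x v)(x_s, y_s) + e^{−s} (div_y v)(x_s, y_s) holds, where (x_s,y_s) = M_s(x,y). -/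
open MeasureTheory Real
open scoped RealInnerProductSpace

noncomputable section

variable {d : ℕ}

/-- Gaussian divergence in the first (`x`) group of variables of a field
`v : ℝ^d × ℝ^d → ℝ^d`: `div_x v - ⟨x, v⟩`. -/
def gDivX (v : EuclideanSpace ℝ (Fin d) × EuclideanSpace ℝ (Fin d) → EuclideanSpace ℝ (Fin d))
    (p : EuclideanSpace ℝ (Fin d) × EuclideanSpace ℝ (Fin d)) : ℝ :=
  (∑ i, fderiv ℝ v p (EuclideanSpace.single i 1, 0) i) - ⟪p.1, v p⟫

/-- Gaussian divergence in the second (`y`) group of variables: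
`div_y v - ⟨y, v⟩`. -/
def gDivY (v : EuclideanSpace ℝ (Fin d) × EuclideanSpace ℝ (Fin d) → EuclideanSpace ℝ (Fin d))
    (p : EuclideanSpace ℝ (Fin d) × EuclideanSpace ℝ (Fin d)) : ℝ :=
  (∑ i, fderiv ℝ v p (0, EuclideanSpace.single i 1) i) - ⟪p.2, v p⟫

/-- Gaussian divergence identity along Mehler rotations; identity
`eq-divergence-wiener` of the paper, stated for cylindrical smooth fields, i.e. in Gaussian
coordinates.  With the rotation `M_s(x,y) = (e^{-s} x + √(1-e^{-2s}) y,
-√(1-e^{-2s}) x + e^{-s} y)` (which preserves `γ ⊗ γ`) and a smooth field `v`,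
`div_y(v(x_s, y_s)) = √(1-e^{-2s}) (div_x v)(x_s,y_s) + e^{-s} (div_y v)(x_s,y_s)`,
all divergences being Gaussian divergences. -/
theorem stmt13
    (v : EuclideanSpace ℝ (Fin d) × EuclideanSpace ℝ (Fin d) → EuclideanSpace ℝ (Fin d))
    (hv : ContDiff ℝ (⊤ : ℕ∞) v) (s : ℝ) (hs : 0 ≤ s) :
    ∀ x y : EuclideanSpace ℝ (Fin d),
      gDivY (fun p => v (Real.exp (-s) • p.1 + Real.sqrt (1 - Real.exp (-2 * s)) • p.2,
          -(Real.sqrt (1 - Real.exp (-2 * s))) • p.1 + Real.exp (-s) • p.2)) (x, y)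
        = Real.sqrt (1 - Real.exp (-2 * s))
            * gDivX v (Real.exp (-s) • x + Real.sqrt (1 - Real.exp (-2 * s)) • y,
                -(Real.sqrt (1 - Real.exp (-2 * s))) • x + Real.exp (-s) • y)
          + Real.exp (-s)
            * gDivY v (Real.exp (-s) • x + Real.sqrt (1 - Real.exp (-2 * s)) • y,
                -(Real.sqrt (1 - Real.exp (-2 * s))) • x + Real.exp (-s) • y) := by
  intro x y
  set α := Real.sqrt (1 - Real.exp (-2 * s)) with hα
  set β := Real.exp (-s) with hβ
  have hexp : Real.exp (-2 * s) ≤ 1 := Real.exp_le_one_iff.2 (by linarith)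
  have hα2 : α ^ 2 = 1 - Real.exp (-2 * s) := Real.sq_sqrt (by linarith)
  have hβ2 : β ^ 2 = Real.exp (-2 * s) := by
    rw [hβ, sq, ← Real.exp_add]; congr 1; ring
  have hsum : α ^ 2 + β ^ 2 = 1 := by rw [hα2, hβ2]; ring
  -- the rotation as a continuous linear map
  set M : (EuclideanSpace ℝ (Fin d) × EuclideanSpace ℝ (Fin d)) →L[ℝ]
      (EuclideanSpace ℝ (Fin d) × EuclideanSpace ℝ (Fin d)) :=
    ((β • ContinuousLinearMap.fst ℝ (EuclideanSpace ℝ (Fin d)) (EuclideanSpace ℝ (Fin d)))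
        + (α • ContinuousLinearMap.snd ℝ (EuclideanSpace ℝ (Fin d)) (EuclideanSpace ℝ (Fin d)))).prod
      (((-α) • ContinuousLinearMap.fst ℝ (EuclideanSpace ℝ (Fin d)) (EuclideanSpace ℝ (Fin d)))
        + (β • ContinuousLinearMap.snd ℝ (EuclideanSpace ℝ (Fin d)) (EuclideanSpace ℝ (Fin d)))) with hM
  have hMapp : ∀ p : EuclideanSpace ℝ (Fin d) × EuclideanSpace ℝ (Fin d),
      M p = (β • p.1 + α • p.2, -α • p.1 + β • p.2) := by
    intro p
    simp [hM, ContinuousLinearMap.prod_apply]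
  have hfun : (fun p : EuclideanSpace ℝ (Fin d) × EuclideanSpace ℝ (Fin d) =>
      v (β • p.1 + α • p.2, -α • p.1 + β • p.2)) = v ∘ M := by
    funext p; simp [hMapp p]
  set q : EuclideanSpace ℝ (Fin d) × EuclideanSpace ℝ (Fin d) :=
    (β • x + α • y, -α • x + β • y) with hq
  have hMq : M (x, y) = q := hMapp _
  have hD : fderiv ℝ (v ∘ M) (x, y) = (fderiv ℝ v q).comp M := by
    refine (fderiv_comp (x, y) ((hv.differentiable (by simp)) _) M.differentiableAt).trans ?_
    rw [M.fderiv, hMq]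
  have key : ∀ w : EuclideanSpace ℝ (Fin d), fderiv ℝ (v ∘ M) (x, y) (0, w)
      = α • fderiv ℝ v q (w, 0) + β • fderiv ℝ v q (0, w) := by
    intro w
    rw [hD]
    have hMw : M (0, w) = (α • w, β • w) := by rw [hMapp]; simp
    rw [ContinuousLinearMap.comp_apply, hMw]
    have hsplit : ((α • w, β • w) : EuclideanSpace ℝ (Fin d) × EuclideanSpace ℝ (Fin d))
        = α • ((w, 0) : EuclideanSpace ℝ (Fin d) × EuclideanSpace ℝ (Fin d))
          + β • ((0, w) : EuclideanSpace ℝ (Fin d) × EuclideanSpace ℝ (Fin d)) := by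
      simp [Prod.ext_iff]
    rw [hsplit, map_add, ContinuousLinearMap.map_smul, ContinuousLinearMap.map_smul]
  have hterm : ∀ i : Fin d,
      fderiv ℝ (fun p : EuclideanSpace ℝ (Fin d) × EuclideanSpace ℝ (Fin d) =>
          v (β • p.1 + α • p.2, -α • p.1 + β • p.2)) (x, y)
        (0, EuclideanSpace.single i 1) i
      = α * fderiv ℝ v q (EuclideanSpace.single i 1, 0) i
        + β * fderiv ℝ v q (0, EuclideanSpace.single i 1) i := by
    intro i
    rw [hfun, key]
    simp [PiLp.add_apply, PiLp.smul_apply, smul_eq_mul]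
  simp only [gDivY, gDivX]
  rw [Finset.sum_congr rfl (fun i _ => hterm i), Finset.sum_add_distrib,
    ← Finset.mul_sum, ← Finset.mul_sum]
  have hinner : (⟪y, v (β • x + α • y, -α • x + β • y)⟫ : ℝ)
      = α * ⟪β • x + α • y, v (β • x + α • y, -α • x + β • y)⟫
        + β * ⟪-α • x + β • y, v (β • x + α • y, -α • x + β • y)⟫ := by
    rw [inner_add_left, inner_add_left, real_inner_smul_left, real_inner_smul_left,
      real_inner_smul_left, real_inner_smul_left]
    linear_combination (-⟪y, v (β • x + α • y, -α • x + β • y)⟫ : ℝ) * hsum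
  rw [hq]
  simp only []
  rw [hinner]
  ring

end
end
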